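/- arXiv:2601.14006 — 3 statements merged into one kernel-verified Lean document; each statement's English description precedes it below -/
import Mathlib

section
/- Let p be a prime and n ≥ 1. Let B, B', C, C' be n×n matrices over ℚ_p with C invertible, and let N, γ₁, γ₂ be nonnegative integers. Suppose that: (i) the matrix A := C⁻¹BC has all entries in ℤ_p; (ii) v_p(C) ≥ −γ₂; (iii) v_p(C⁻¹) ≥ −γ₁; (iv) v_p(B − B') ≥ N + γ₁ + γ₂ + 1; (v) v_p(C − C') ≥ N + γ₁ + 2γ₂ + 1. Then C' is invertible and v_p(C'⁻¹B'C' − C⁻¹BC) ≥ N + 1. (In other words: given the matrix of Frobenius in the rigid basis with p-adic precision N + γ₁ + γ₂ + 1 and the change-of-basis matrix with precision N + γ₁ + 2γ₂ + 1, one obtains the matrix of Frobenius in the crystalline basis with precision N + 1.) -/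
/-!
With `‖·‖` the sup norm of the entries, which is submultiplicative on matrices over the
ultrametric field `ℚ_[p]`, put `A = C⁻¹ B C` and `E = C⁻¹ C'`, so that `C' = C E` and
`C'⁻¹ B' C' = E⁻¹ (C⁻¹ B' C) E`. The hypotheses give `‖E - 1‖ ≤ p^(-(N+1))` and
`‖C⁻¹ B' C - A‖ ≤ p^(-(N+1))`. Since `E ≡ 1` modulo the maximal ideal of `ℤ_[p]`, its determinant
reduces to `1`, so `E ∈ GL_n(ℤ_[p])`. Then
`E⁻¹ (C⁻¹ B' C) E - A = E⁻¹ ((C⁻¹ B' C - A) E + A (E - 1) + (1 - E) A)` is an integral matrix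
times a matrix of norm at most `p^(-(N+1))`.
-/

open scoped Matrix.Norms.Elementwise

namespace Matrix

variable {ι : Type*} [Fintype ι]

instance {m n K : Type*} [Fintype m] [Fintype n] [SeminormedAddCommGroup K]
    [IsUltrametricDist K] : IsUltrametricDist (Matrix m n K) :=
  inferInstanceAs (IsUltrametricDist (m → n → K))

theorem norm_mul_le_of_le_of_isUltrametricDist {l m n K : Type*} [Fintype l] [Fintype m]
    [Fintype n] [SeminormedRing K] [IsUltrametricDist K] {M : Matrix l m K} {N : Matrix m n K}
    {a b : ℝ} (hM : ‖M‖ ≤ a) (hN : ‖N‖ ≤ b) : ‖M * N‖ ≤ a * b := by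
  have ha : 0 ≤ a := (norm_nonneg _).trans hM
  have hb : 0 ≤ b := (norm_nonneg _).trans hN
  refine (norm_le_iff (mul_nonneg ha hb)).2 fun i j => ?_
  rw [mul_apply]
  refine IsUltrametricDist.norm_sum_le_of_forall_le_of_nonneg (mul_nonneg ha hb) fun k _ => ?_
  exact (norm_mul_le _ _).trans <| mul_le_mul ((norm_entry_le_entrywise_sup_norm M).trans hM)
    ((norm_entry_le_entrywise_sup_norm N).trans hN) (norm_nonneg _) ha

theorem isUnit_of_sub_one_mem_maximalIdeal [DecidableEq ι] {R : Type*} [CommRing R] [IsLocalRing R]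
    {M : Matrix ι ι R} (h : ∀ i j, (M - 1) i j ∈ IsLocalRing.maximalIdeal R) : IsUnit M := by
  have hres : (IsLocalRing.residue R).mapMatrix M = 1 := by
    rw [← sub_eq_zero, ← map_one (IsLocalRing.residue R).mapMatrix, ← map_sub]
    ext i j
    exact (IsLocalRing.residue_eq_zero_iff _).2 (h i j)
  rw [isUnit_iff_isUnit_det, ← IsLocalRing.residue_ne_zero_iff_isUnit, RingHom.map_det, hres,
    det_one]
  exact one_ne_zero

variable {K : Type*} [NormedField K] [DecidableEq ι]

theorem norm_one_le : ‖(1 : Matrix ι ι K)‖ ≤ 1 :=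
  (norm_le_iff zero_le_one).2 fun i j => by rw [one_apply]; split_ifs <;> simp

variable [IsUltrametricDist K]

theorem norm_le_one_of_norm_sub_one_le_one {E : Matrix ι ι K} (hE : ‖E - 1‖ ≤ 1) : ‖E‖ ≤ 1 :=
  calc ‖E‖ = ‖(E - 1) + 1‖ := by rw [sub_add_cancel]
    _ ≤ max ‖E - 1‖ ‖(1 : Matrix ι ι K)‖ := IsUltrametricDist.norm_add_le_max _ _
    _ ≤ 1 := max_le hE norm_one_le

theorem norm_inv_mul_mul_sub_le {A A' E : Matrix ι ι K} {r : ℝ} (hA : ‖A‖ ≤ 1)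
    (hA' : ‖A' - A‖ ≤ r) (hE : ‖E - 1‖ ≤ r) (hr : r ≤ 1) (hEunit : IsUnit E)
    (hEinv : ‖E⁻¹‖ ≤ 1) : ‖E⁻¹ * A' * E - A‖ ≤ r := by
  have hE1 : ‖E‖ ≤ 1 := norm_le_one_of_norm_sub_one_le_one (hE.trans hr)
  have hfactor : E⁻¹ * A' * E - A = E⁻¹ * ((A' - A) * E + A * (E - 1) + (1 - E) * A) := by
    have hinv : E⁻¹ * E = 1 := nonsing_inv_mul E ((isUnit_iff_isUnit_det E).1 hEunit)
    calc E⁻¹ * A' * E - A = E⁻¹ * A' * E - (E⁻¹ * E) * A := by rw [hinv, one_mul]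
      _ = _ := by noncomm_ring
  have hsum : ‖(A' - A) * E + A * (E - 1) + (1 - E) * A‖ ≤ r := by
    refine (IsUltrametricDist.norm_add_le_max _ _).trans (max_le ?_ ?_)
    · refine (IsUltrametricDist.norm_add_le_max _ _).trans (max_le ?_ ?_)
      · simpa using norm_mul_le_of_le_of_isUltrametricDist hA' hE1
      · simpa using norm_mul_le_of_le_of_isUltrametricDist hA hE
    · rw [← norm_sub_rev] at hE
      simpa using norm_mul_le_of_le_of_isUltrametricDist hE hA
  rw [hfactor]
  simpa using norm_mul_le_of_le_of_isUltrametricDist hEinv hsum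

theorem isUnit_and_norm_inv_le_one_of_norm_sub_one_lt_one {p : ℕ} [Fact p.Prime]
    {E : Matrix ι ι ℚ_[p]} (hE : ‖E - 1‖ < 1) : IsUnit E ∧ ‖E⁻¹‖ ≤ 1 := by
  have hE1 := norm_le_one_of_norm_sub_one_le_one hE.le
  let E₀ : Matrix ι ι ℤ_[p] :=
    of fun i j => ⟨E i j, (norm_entry_le_entrywise_sup_norm E).trans hE1⟩
  have hE₀ : PadicInt.Coe.ringHom.mapMatrix E₀ = E := rfl
  have hunit : IsUnit E₀ := isUnit_of_sub_one_mem_maximalIdeal fun i j => by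
    have hcoe : ((E₀ - 1) i j : ℚ_[p]) = (E - 1) i j := by
      rw [← hE₀, ← map_one PadicInt.Coe.ringHom.mapMatrix, ← map_sub]; rfl
    rw [IsLocalRing.mem_maximalIdeal, PadicInt.mem_nonunits, PadicInt.norm_def, hcoe]
    exact (norm_entry_le_entrywise_sup_norm _).trans_lt hE
  refine ⟨hE₀ ▸ hunit.map _, ?_⟩
  have hinv : E⁻¹ = PadicInt.Coe.ringHom.mapMatrix E₀⁻¹ := inv_eq_left_inv <| by
    rw [← hE₀, ← map_mul, nonsing_inv_mul _ ((isUnit_iff_isUnit_det _).1 hunit), map_one]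
  rw [hinv]
  exact (norm_le_iff zero_le_one).2 fun i j => PadicInt.norm_le_one _

theorem isUnit_and_norm_inv_mul_mul_sub_le {p : ℕ} [Fact p.Prime] {B B' C C' : Matrix ι ι ℚ_[p]}
    {r : ℝ} (hC : IsUnit C) (hA : ‖C⁻¹ * B * C‖ ≤ 1) (hB : ‖C⁻¹‖ * ‖B - B'‖ * ‖C‖ ≤ r)
    (hCC' : ‖C⁻¹‖ * ‖C - C'‖ ≤ r) (hr : r < 1) :
    IsUnit C' ∧ ‖C'⁻¹ * B' * C' - C⁻¹ * B * C‖ ≤ r := by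
  have hCdet := (isUnit_iff_isUnit_det C).1 hC
  set E := C⁻¹ * C'
  have hE : ‖E - 1‖ ≤ r :=
    calc ‖E - 1‖ = ‖C⁻¹ * (C' - C)‖ := by rw [Matrix.mul_sub, nonsing_inv_mul C hCdet]
      _ ≤ ‖C⁻¹‖ * ‖C' - C‖ := norm_mul_le_of_le_of_isUltrametricDist le_rfl le_rfl
      _ ≤ r := by rwa [norm_sub_rev]
  obtain ⟨hEunit, hEinv⟩ := isUnit_and_norm_inv_le_one_of_norm_sub_one_lt_one (hE.trans_lt hr)
  have hC' : C' = C * E := by rw [← Matrix.mul_assoc, mul_nonsing_inv C hCdet, Matrix.one_mul]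
  have hA' : ‖C⁻¹ * B' * C - C⁻¹ * B * C‖ ≤ r :=
    calc ‖C⁻¹ * B' * C - C⁻¹ * B * C‖ = ‖C⁻¹ * (B' - B) * C‖ := by
          rw [Matrix.mul_sub, Matrix.sub_mul]
      _ ≤ ‖C⁻¹‖ * ‖B' - B‖ * ‖C‖ := norm_mul_le_of_le_of_isUltrametricDist
          (norm_mul_le_of_le_of_isUltrametricDist le_rfl le_rfl) le_rfl
      _ ≤ r := by rwa [norm_sub_rev]
  refine ⟨hC' ▸ hC.mul hEunit, ?_⟩
  have hconj : C'⁻¹ * B' * C' = E⁻¹ * (C⁻¹ * B' * C) * E := by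
    rw [hC', Matrix.mul_inv_rev]
    simp only [Matrix.mul_assoc]
  rw [hconj]
  exact norm_inv_mul_mul_sub_le hA hA' hE hr.le hEunit hEinv

end Matrix

theorem frobenius_crys_precision_general (p : ℕ) [Fact p.Prime] (n : ℕ)
    (B B' C C' : Matrix (Fin n) (Fin n) ℚ_[p]) (hC : IsUnit C)
    (N γ₁ γ₂ : ℕ)
    (hA : ∀ i j, ‖(C⁻¹ * B * C) i j‖ ≤ 1)
    (hvC : ∀ i j, ‖C i j‖ ≤ (p : ℝ) ^ (γ₂ : ℤ))
    (hvCinv : ∀ i j, ‖C⁻¹ i j‖ ≤ (p : ℝ) ^ (γ₁ : ℤ))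
    (hB : ∀ i j, ‖(B - B') i j‖ ≤ (p : ℝ) ^ (-((N : ℤ) + γ₁ + γ₂ + 1)))
    (hCC' : ∀ i j, ‖(C - C') i j‖ ≤ (p : ℝ) ^ (-((N : ℤ) + γ₁ + 2 * γ₂ + 1))) :
    IsUnit C' ∧
      ∀ i j, ‖(C'⁻¹ * B' * C' - C⁻¹ * B * C) i j‖ ≤ (p : ℝ) ^ (-((N : ℤ) + 1)) := by
  have hp : (1 : ℝ) < p := mod_cast (Fact.out : p.Prime).one_lt
  have hp₀ : (p : ℝ) ≠ 0 := (zero_lt_one.trans hp).ne'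
  have hnorm {M : Matrix (Fin n) (Fin n) ℚ_[p]} {k : ℤ} (h : ∀ i j, ‖M i j‖ ≤ (p : ℝ) ^ k) :
      ‖M‖ ≤ (p : ℝ) ^ k :=
    (Matrix.norm_le_iff (by positivity)).2 h
  have hBC : ‖C⁻¹‖ * ‖B - B'‖ * ‖C‖ ≤ (p : ℝ) ^ (-((N : ℤ) + 1)) :=
    calc ‖C⁻¹‖ * ‖B - B'‖ * ‖C‖
        ≤ (p : ℝ) ^ (γ₁ : ℤ) * (p : ℝ) ^ (-((N : ℤ) + γ₁ + γ₂ + 1)) * (p : ℝ) ^ (γ₂ : ℤ) := by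
          gcongr <;> exact hnorm ‹_›
      _ = (p : ℝ) ^ (-((N : ℤ) + 1)) := by
          rw [← zpow_add₀ hp₀, ← zpow_add₀ hp₀]
          ring_nf
  have hCC : ‖C⁻¹‖ * ‖C - C'‖ ≤ (p : ℝ) ^ (-((N : ℤ) + 1)) :=
    calc ‖C⁻¹‖ * ‖C - C'‖ ≤ (p : ℝ) ^ (γ₁ : ℤ) * (p : ℝ) ^ (-((N : ℤ) + γ₁ + 2 * γ₂ + 1)) := by
          gcongr <;> exact hnorm ‹_›
      _ ≤ (p : ℝ) ^ (-((N : ℤ) + 1)) := by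
          rw [← zpow_add₀ hp₀]
          exact zpow_le_zpow_right₀ hp.le (by omega)
  obtain ⟨hC'unit, hbound⟩ := Matrix.isUnit_and_norm_inv_mul_mul_sub_le hC
    ((Matrix.norm_le_iff zero_le_one).2 hA) hBC hCC (zpow_lt_one_of_neg₀ hp (by omega))
  exact ⟨hC'unit, fun i j => (Matrix.norm_entry_le_entrywise_sup_norm _).trans hbound⟩

/-- precision of the conjugated Frobenius matrix.
For a matrix `M` over `ℚ_[p]`, `v_p(M) ≥ k` is expressed as
`∀ i j, ‖M i j‖ ≤ (p : ℝ) ^ (-k : ℤ)`, and "entries in `ℤ_p`" as `‖M i j‖ ≤ 1`. -/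
theorem frobenius_crys_precision (p : ℕ) [Fact p.Prime] (n : ℕ) (hn : 1 ≤ n)
    (B B' C C' : Matrix (Fin n) (Fin n) ℚ_[p]) (hC : IsUnit C)
    (N γ₁ γ₂ : ℕ)
    (hA : ∀ i j, ‖(C⁻¹ * B * C) i j‖ ≤ 1)
    (hvC : ∀ i j, ‖C i j‖ ≤ (p : ℝ) ^ (γ₂ : ℤ))
    (hvCinv : ∀ i j, ‖C⁻¹ i j‖ ≤ (p : ℝ) ^ (γ₁ : ℤ))
    (hB : ∀ i j, ‖(B - B') i j‖ ≤ (p : ℝ) ^ (-((N : ℤ) + γ₁ + γ₂ + 1)))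
    (hCC' : ∀ i j, ‖(C - C') i j‖ ≤ (p : ℝ) ^ (-((N : ℤ) + γ₁ + 2 * γ₂ + 1))) :
    IsUnit C' ∧
      ∀ i j, ‖(C'⁻¹ * B' * C' - C⁻¹ * B * C) i j‖ ≤ (p : ℝ) ^ (-((N : ℤ) + 1)) :=
  frobenius_crys_precision_general p n B B' C C' hC N γ₁ γ₂ hA hvC hvCinv hB hCC'
end

section
/- Let p be a prime, n ≥ 1, and N ≥ 1 an integer. Let A, A' be n×n matrices over ℚ_p such that A is invertible, p·A⁻¹ has all entries in ℤ_p, and v_p(A − A') ≥ N + 1. Then A' is invertible, p·A'⁻¹ has all entries in ℤ_p, and v_p(p·A'⁻¹ − p·A⁻¹) ≥ N. (In other words: given the matrix of Frobenius on crystalline cohomology with p-adic precision N + 1, one recovers the matrix of Verschiebung V = pF⁻¹ with precision N.) -/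
/-!
Write `V = p • A⁻¹` and `C = A⁻¹ * (A - A') = p⁻¹ • V * (A - A')`, so that `A' = A * (1 - C)` and
the entries of `C` have norm at most `p ^ (-N) < 1`. Then `1 - C` is the image of a matrix over
`ℤ_[p]` that reduces to the identity mod `p`, hence is invertible with integral inverse. Therefore
`p • A'⁻¹ = (1 - C)⁻¹ * V` is integral, and `p • A'⁻¹ - V = (1 - C)⁻¹ * C * V` has entries of norm
at most `p ^ (-N)` by the ultrametric inequality.
-/

open Matrix

namespace Matrix

theorem norm_mul_apply_le_mul {R l m n : Type*} [NormedRing R] [IsUltrametricDist R] [Fintype m]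
    {M : Matrix l m R} {N : Matrix m n R} {a b : ℝ} (ha : 0 ≤ a) (hb : 0 ≤ b)
    (hM : ∀ i j, ‖M i j‖ ≤ a) (hN : ∀ i j, ‖N i j‖ ≤ b) (i : l) (j : n) :
    ‖(M * N) i j‖ ≤ a * b :=
  IsUltrametricDist.norm_sum_le_of_forall_le_of_nonneg (mul_nonneg ha hb) fun k _ =>
    (norm_mul_le _ _).trans (mul_le_mul (hM i k) (hN k j) (norm_nonneg _) ha)

variable {n : Type*} [Fintype n] [DecidableEq n]

theorem map_nonsing_inv {R S : Type*} [CommRing R] [CommRing S] (f : R →+* S)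
    {M : Matrix n n R} (hM : IsUnit M) : (M.map f)⁻¹ = M⁻¹.map f := by
  refine inv_eq_right_inv ?_
  rw [← f.mapMatrix_apply, ← f.mapMatrix_apply, ← map_mul,
    mul_nonsing_inv M ((isUnit_iff_isUnit_det M).mp hM), map_one]

theorem nonsing_inv_one_sub_mul {R : Type*} [CommRing R] {M : Matrix n n R}
    (hM : IsUnit (1 - M)) : (1 - M)⁻¹ * M = (1 - M)⁻¹ - 1 := by
  rw [← sub_sub_cancel (1 - M)⁻¹ ((1 - M)⁻¹ * M), ← mul_one_sub,
    nonsing_inv_mul _ ((isUnit_iff_isUnit_det _).mp hM)]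

theorem isUnit_one_sub_of_forall_mem_maximalIdeal {R : Type*} [CommRing R] [IsLocalRing R]
    {M : Matrix n n R} (hM : ∀ i j, M i j ∈ IsLocalRing.maximalIdeal R) : IsUnit (1 - M) := by
  have hM0 : M.map (IsLocalRing.residue R) = 0 := by
    ext i j
    exact (IsLocalRing.residue_eq_zero_iff _).2 (hM i j)
  have hres : (1 - M).map (IsLocalRing.residue R) = 1 := by
    rw [← RingHom.mapMatrix_apply, map_sub, map_one, RingHom.mapMatrix_apply, hM0, sub_zero]
  rw [isUnit_iff_isUnit_det, ← IsLocalRing.residue_ne_zero_iff_isUnit, RingHom.map_det,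
    RingHom.mapMatrix_apply, hres, det_one]
  exact one_ne_zero

end Matrix

namespace Padic

variable {p : ℕ} [Fact p.Prime] {n : Type*} [Fintype n] [DecidableEq n]

theorem isUnit_one_sub_and_norm_inv_apply_le_one {C : Matrix n n ℚ_[p]}
    (hC : ∀ i j, ‖C i j‖ < 1) : IsUnit (1 - C) ∧ ∀ i j, ‖(1 - C)⁻¹ i j‖ ≤ 1 := by
  let D : Matrix n n ℤ_[p] := Matrix.of fun i j => ⟨C i j, (hC i j).le⟩
  have hD : IsUnit (1 - D) :=
    isUnit_one_sub_of_forall_mem_maximalIdeal fun i j => PadicInt.mem_nonunits.2 (hC i j)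
  have hmap : (1 - D).map PadicInt.Coe.ringHom = 1 - C := by
    rw [← RingHom.mapMatrix_apply, map_sub, map_one]
    rfl
  refine ⟨hmap ▸ hD.map (PadicInt.Coe.ringHom (p := p)).mapMatrix, fun i j => ?_⟩
  rw [← hmap, map_nonsing_inv _ hD]
  exact PadicInt.norm_le_one _

theorem norm_inv_mul_apply_le {A E : Matrix n n ℚ_[p]} {r : ℝ} (hr : 0 ≤ r)
    (hA : ∀ i j, ‖((p : ℚ_[p]) • A⁻¹) i j‖ ≤ 1) (hE : ∀ i j, ‖E i j‖ ≤ r) (i j : n) :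
    ‖(A⁻¹ * E) i j‖ ≤ p * r := by
  have h := norm_mul_apply_le_mul zero_le_one hr hA hE i j
  rw [Matrix.smul_mul, Matrix.smul_apply, norm_smul, norm_p, one_mul] at h
  exact (inv_mul_le_iff₀ (by exact_mod_cast (Fact.out : p.Prime).pos)).1 h

end Padic

open Padic in
theorem verschiebung_precision_general (p : ℕ) [Fact p.Prime] (n N : ℕ) (hN : 1 ≤ N)
    (A A' : Matrix (Fin n) (Fin n) ℚ_[p]) (hA : IsUnit A)
    (hint : ∀ i j, ‖((p : ℚ_[p]) • A⁻¹) i j‖ ≤ 1)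
    (happrox : ∀ i j, ‖(A - A') i j‖ ≤ (p : ℝ) ^ (-((N : ℤ) + 1))) :
    IsUnit A' ∧ (∀ i j, ‖((p : ℚ_[p]) • A'⁻¹) i j‖ ≤ 1) ∧
      ∀ i j, ‖((p : ℚ_[p]) • A'⁻¹ - (p : ℚ_[p]) • A⁻¹) i j‖ ≤ (p : ℝ) ^ (-(N : ℤ)) := by
  have hp : (1 : ℝ) < p := by exact_mod_cast (Fact.out : p.Prime).one_lt
  set V := (p : ℚ_[p]) • A⁻¹
  set C := A⁻¹ * (A - A')
  have hC : ∀ i j, ‖C i j‖ ≤ (p : ℝ) ^ (-(N : ℤ)) := fun i j => by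
    have h := norm_inv_mul_apply_le (by positivity) hint happrox i j
    rwa [← zpow_one_add₀ (by positivity), show 1 + -((N : ℤ) + 1) = -N by ring] at h
  have hC1 : ∀ i j, ‖C i j‖ < 1 := fun i j =>
    (hC i j).trans_lt (zpow_lt_one_of_neg₀ hp (by omega))
  obtain ⟨hU, hUinv⟩ := isUnit_one_sub_and_norm_inv_apply_le_one hC1
  have hA' : A' = A * (1 - C) := by
    rw [mul_sub, mul_one, mul_nonsing_inv_cancel_left _ _ ((isUnit_iff_isUnit_det A).mp hA)]
    abel
  have hV' : (p : ℚ_[p]) • A'⁻¹ = (1 - C)⁻¹ * V := by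
    rw [hA', Matrix.mul_inv_rev, Matrix.mul_smul]
  have hdiff : (p : ℚ_[p]) • A'⁻¹ - V = (1 - C)⁻¹ * (C * V) := by
    rw [hV', ← mul_assoc, nonsing_inv_one_sub_mul hU, sub_mul, one_mul]
  refine ⟨hA' ▸ hA.mul hU, fun i j => ?_, fun i j => ?_⟩
  · rw [hV']
    exact (norm_mul_apply_le_mul zero_le_one zero_le_one hUinv hint i j).trans_eq (mul_one 1)
  · rw [hdiff, ← one_mul ((p : ℝ) ^ _), ← mul_one ((p : ℝ) ^ _)]
    exact norm_mul_apply_le_mul zero_le_one (by positivity) hUinv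
      (norm_mul_apply_le_mul (by positivity) zero_le_one hC hint) i j

/-- recovering Verschiebung `V = p F⁻¹` with precision `N` from
Frobenius with precision `N + 1`. -/
theorem verschiebung_precision (p : ℕ) [Fact p.Prime] (n N : ℕ) (hn : 1 ≤ n) (hN : 1 ≤ N)
    (A A' : Matrix (Fin n) (Fin n) ℚ_[p]) (hA : IsUnit A)
    (hint : ∀ i j, ‖((p : ℚ_[p]) • A⁻¹) i j‖ ≤ 1)
    (happrox : ∀ i j, ‖(A - A') i j‖ ≤ (p : ℝ) ^ (-((N : ℤ) + 1))) :
    IsUnit A' ∧ (∀ i j, ‖((p : ℚ_[p]) • A'⁻¹) i j‖ ≤ 1) ∧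
      ∀ i j, ‖((p : ℚ_[p]) • A'⁻¹ - (p : ℚ_[p]) • A⁻¹) i j‖ ≤ (p : ℝ) ^ (-(N : ℤ)) :=
  verschiebung_precision_general p n N hN A A' hA hint happrox
end

section
/- Let p be a prime and n ≥ 1. Let A be an invertible n×n matrix over ℚ_p, and let m, a be integers with a + m ≥ 1. Suppose v_p(A⁻¹) ≥ m, and let A' be an n×n matrix over ℚ_p with v_p(A − A') ≥ a. Then A' is invertible, v_p(A'⁻¹) ≥ m, and v_p(A'⁻¹ − A⁻¹) ≥ a + 2m. (That is: if A is known with precision a and its inverse has valuation at least m, then A⁻¹ is determined with precision at least a + 2m.) -/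
/-!
Write `A' = A * B` with `B = 1 - A⁻¹ * (A - A')`. The entries of `A⁻¹ * (A - A')` have valuation
at least `a + m ≥ 1`, so `B` is a matrix over `ℤ_p` congruent to `1` modulo `p`. Its determinant is
then congruent to `1` modulo `p`, hence `B ∈ GL_n(ℤ_p)` and `v_p(B⁻¹) ≥ 0`. Since valuations add
under matrix products over an ultrametric ring, `A'⁻¹ = B⁻¹ * A⁻¹` has valuation at least `m`, and
`A'⁻¹ - A⁻¹ = A'⁻¹ * (A - A') * A⁻¹` has valuation at least `m + a + m`.
-/

open IsUltrametricDist

namespace Matrix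

theorem norm_mul_apply_le_of_forall_norm_apply_le {l m n R : Type*} [Fintype m]
    [SeminormedRing R] [IsUltrametricDist R] {M : Matrix l m R} {N : Matrix m n R} {c d : ℝ}
    (hc : 0 ≤ c) (hd : 0 ≤ d) (hM : ∀ i j, ‖M i j‖ ≤ c) (hN : ∀ i j, ‖N i j‖ ≤ d)
    (i : l) (j : n) : ‖(M * N) i j‖ ≤ c * d :=
  norm_sum_le_of_forall_le_of_nonneg (mul_nonneg hc hd) fun k _ =>
    (norm_mul_le _ _).trans (mul_le_mul (hM i k) (hN k j) (norm_nonneg _) hc)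

theorem isUnit_of_one_sub_apply_mem_maximalIdeal {n R : Type*} [Fintype n] [DecidableEq n]
    [CommRing R] [IsLocalRing R] {B : Matrix n n R}
    (h : ∀ i j, (1 - B) i j ∈ IsLocalRing.maximalIdeal R) : IsUnit B := by
  let π := Ideal.Quotient.mk (IsLocalRing.maximalIdeal R)
  have hπB : π.mapMatrix 1 = π.mapMatrix B := by
    ext i j
    exact Ideal.Quotient.eq.mpr (h i j)
  have hdet : 1 - B.det ∈ IsLocalRing.maximalIdeal R := by
    rw [← Ideal.Quotient.eq, ← det_one (n := n), RingHom.map_det, RingHom.map_det, hπB]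
  rw [isUnit_iff_isUnit_det, ← sub_sub_cancel 1 B.det]
  exact IsLocalRing.isUnit_one_sub_self_of_mem_nonunits _ hdet

theorem isUnit_and_norm_inv_apply_le_one_of_norm_one_sub_apply_lt_one {p : ℕ} [Fact p.Prime]
    {n : Type*} [Fintype n] [DecidableEq n] {B : Matrix n n ℚ_[p]}
    (h : ∀ i j, ‖(1 - B) i j‖ < 1) : IsUnit B ∧ ∀ i j, ‖B⁻¹ i j‖ ≤ 1 := by
  have hB : ∀ i j, ‖B i j‖ ≤ 1 := fun i j => by
    rw [← sub_sub_cancel (1 : Matrix n n ℚ_[p]) B, sub_apply, sub_eq_add_neg]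
    refine (norm_add_le_max _ _).trans (max_le ?_ ((norm_neg ((1 - B) i j)).trans_lt (h i j)).le)
    rw [one_apply]; split_ifs <;> simp
  let ι : Matrix n n ℤ_[p] →+* Matrix n n ℚ_[p] := PadicInt.Coe.ringHom.mapMatrix
  let C : Matrix n n ℤ_[p] := of fun i j => ⟨B i j, hB i j⟩
  have hιC : ι C = B := rfl
  have hC : IsUnit C := isUnit_of_one_sub_apply_mem_maximalIdeal fun i j => by
    rw [IsLocalRing.mem_maximalIdeal, PadicInt.mem_nonunits, PadicInt.norm_def]
    change ‖ι (1 - C) i j‖ < 1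
    rw [map_sub, map_one, hιC]
    exact h i j
  have hBinv : B⁻¹ = ι C⁻¹ := by
    refine inv_eq_right_inv ?_
    rw [← hιC, ← map_mul, mul_nonsing_inv _ ((isUnit_iff_isUnit_det C).mp hC), map_one]
  refine ⟨hιC ▸ hC.map ι, fun i j => ?_⟩
  rw [hBinv]
  exact PadicInt.norm_le_one (C⁻¹ i j)

end Matrix

open Matrix in
theorem matrix_inverse_precision_general (p : ℕ) [Fact p.Prime] (n : ℕ)
    (A A' : Matrix (Fin n) (Fin n) ℚ_[p]) (hA : IsUnit A)
    (m a : ℤ) (hma : 1 ≤ a + m)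
    (hAinv : ∀ i j, ‖A⁻¹ i j‖ ≤ (p : ℝ) ^ (-m))
    (happrox : ∀ i j, ‖(A - A') i j‖ ≤ (p : ℝ) ^ (-a)) :
    IsUnit A' ∧ (∀ i j, ‖A'⁻¹ i j‖ ≤ (p : ℝ) ^ (-m)) ∧
      ∀ i j, ‖(A'⁻¹ - A⁻¹) i j‖ ≤ (p : ℝ) ^ (-(a + 2 * m)) := by
  have hp : (1 : ℝ) < p := by exact_mod_cast (Fact.out : p.Prime).one_lt
  have hm : (0 : ℝ) ≤ (p : ℝ) ^ (-m) := by positivity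
  have ha : (0 : ℝ) ≤ (p : ℝ) ^ (-a) := by positivity
  have hAdet : IsUnit A.det := (isUnit_iff_isUnit_det A).mp hA
  set B := 1 - A⁻¹ * (A - A') with hB
  have hAB : A * B = A' := by
    rw [hB, mul_sub, mul_one, ← mul_assoc, mul_nonsing_inv _ hAdet, one_mul, sub_sub_cancel]
  obtain ⟨hBunit, hBinv⟩ := isUnit_and_norm_inv_apply_le_one_of_norm_one_sub_apply_lt_one
    (B := B) fun i j => by
      rw [hB, sub_sub_cancel]
      refine (norm_mul_apply_le_of_forall_norm_apply_le hm ha hAinv happrox i j).trans_lt ?_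
      rw [← zpow_add₀ (by positivity)]
      exact zpow_lt_one_of_neg₀ hp (by omega)
  have hA'unit : IsUnit A' := hAB ▸ hA.mul hBunit
  have hA'inv : ∀ i j, ‖A'⁻¹ i j‖ ≤ (p : ℝ) ^ (-m) := by
    rw [← hAB, Matrix.mul_inv_rev]
    simpa using norm_mul_apply_le_of_forall_norm_apply_le zero_le_one hm hBinv hAinv
  refine ⟨hA'unit, hA'inv, fun i j => ?_⟩
  have hdiff : A'⁻¹ - A⁻¹ = A'⁻¹ * ((A - A') * A⁻¹) := by
    rw [sub_mul, mul_nonsing_inv _ hAdet, mul_sub, mul_one, ← mul_assoc,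
      nonsing_inv_mul _ ((isUnit_iff_isUnit_det A').mp hA'unit), one_mul]
  rw [hdiff]
  refine (norm_mul_apply_le_of_forall_norm_apply_le hm (mul_nonneg ha hm) hA'inv
    (norm_mul_apply_le_of_forall_norm_apply_le ha hm happrox hAinv) i j).trans_eq ?_
  rw [← zpow_add₀ (by positivity), ← zpow_add₀ (by positivity)]
  ring_nf

/-- precision of the inverse of a p-adic matrix
(Caruso–Roe–Vaccon / Lemma on precision of inverses). -/
theorem matrix_inverse_precision (p : ℕ) [Fact p.Prime] (n : ℕ) (hn : 1 ≤ n)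
    (A A' : Matrix (Fin n) (Fin n) ℚ_[p]) (hA : IsUnit A)
    (m a : ℤ) (hma : 1 ≤ a + m)
    (hAinv : ∀ i j, ‖A⁻¹ i j‖ ≤ (p : ℝ) ^ (-m))
    (happrox : ∀ i j, ‖(A - A') i j‖ ≤ (p : ℝ) ^ (-a)) :
    IsUnit A' ∧ (∀ i j, ‖A'⁻¹ i j‖ ≤ (p : ℝ) ^ (-m)) ∧
      ∀ i j, ‖(A'⁻¹ - A⁻¹) i j‖ ≤ (p : ℝ) ^ (-(a + 2 * m)) :=
  matrix_inverse_precision_general p n A A' hA m a hma hAinv happrox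
end
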